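/- Let A be a symmetric d×d real matrix, B a d×d real matrix, e ∈ ℝ^d, v₀ ∈ ℝ^d, and β, y ∈ ℝ. Let v : ℝ^p → ℝ^d be differentiable at θ, set d(θ) = β·B·(v(θ) − v₀), z(θ) = (1/2)·y·((e − d(θ))ᵀA(e − d(θ)) − (e + d(θ))ᵀA(e + d(θ))), and ℓ(θ) = softplus(z(θ)) where softplus(z) = log(1 + e^z). Then ℓ is differentiable at θ and its gradient satisfies ∇ℓ(θ) = −2βy·σ(z(θ))·(Dv(θ))ᵀ·BᵀA·e, where σ(z) = 1/(1+e^{−z}) is the logistic sigmoid and Dv(θ) is the Jacobian of v at θ; equivalently, the negative gradient equals 2βy·σ(z(θ))·(Dv(θ))ᵀBᵀA·e, proportional to σ(z(θ))·y·(∂v/∂θ)ᵀ·B·Σ⁻¹·e when A = Σ⁻¹. -/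

import Mathlib

open Matrix

/-- Gradient form of the π-StepNFT step loss: with `d(θ) = β·B·(v(θ) − v₀)`,
`z(θ) = (1/2)·y·((e−d)ᵀA(e−d) − (e+d)ᵀA(e+d))` and `ℓ = softplus ∘ z`, the loss is
differentiable at `θ` and each gradient component satisfies
`(∇ℓ(θ))ᵢ = −2βy·σ(z(θ))·⟨Dv(θ)eᵢ, BᵀA e⟩`, i.e. `∇ℓ(θ) = −2βy·σ(z(θ))·(Dv)ᵀBᵀA e`. -/
theorem stmt_4 (p dn : ℕ) (A B : Matrix (Fin dn) (Fin dn) ℝ) (hA : A.IsSymm)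
    (e v₀ : Fin dn → ℝ) (β y : ℝ)
    (v : (Fin p → ℝ) → (Fin dn → ℝ)) (θ : Fin p → ℝ)
    (hv : DifferentiableAt ℝ v θ)
    (dd : (Fin p → ℝ) → (Fin dn → ℝ))
    (hdd : dd = fun θ' => β • (B *ᵥ (v θ' - v₀)))
    (z : (Fin p → ℝ) → ℝ)
    (hz : z = fun θ' => (1 / 2) * y *
      ((e - dd θ') ⬝ᵥ (A *ᵥ (e - dd θ')) - (e + dd θ') ⬝ᵥ (A *ᵥ (e + dd θ'))))
    (L : (Fin p → ℝ) → ℝ)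
    (hL : L = fun θ' => Real.log (1 + Real.exp (z θ'))) :
    DifferentiableAt ℝ L θ ∧
    ∀ i : Fin p, fderiv ℝ L θ (Pi.single i 1) =
      -2 * β * y * (1 / (1 + Real.exp (-(z θ)))) *
        ((fderiv ℝ v θ (Pi.single i 1)) ⬝ᵥ (Bᵀ *ᵥ (A *ᵥ e))) := by
  classical
  set w : Fin dn → ℝ := Bᵀ *ᵥ (A *ᵥ e) with hw
  have hAe : ∀ u d' : Fin dn → ℝ, u ⬝ᵥ (A *ᵥ d') = (A *ᵥ u) ⬝ᵥ d' := by
    intro u d'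
    rw [Matrix.dotProduct_mulVec, ← Matrix.mulVec_transpose, hA.eq]
  have hsym : ∀ u d' : Fin dn → ℝ, u ⬝ᵥ (A *ᵥ d') = d' ⬝ᵥ (A *ᵥ u) := by
    intro u d'
    rw [hAe u d', dotProduct_comm]
  have hz' : z = fun θ' => (-2*β*y) * (w ⬝ᵥ (v θ' - v₀)) := by
    funext θ'
    have hd : dd θ' = β • (B *ᵥ (v θ' - v₀)) := by rw [hdd]
    have h1 : e ⬝ᵥ (A *ᵥ dd θ') = β * (w ⬝ᵥ (v θ' - v₀)) := by
      rw [hd, Matrix.mulVec_smul, dotProduct_smul, hAe,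
        Matrix.dotProduct_mulVec, hw, ← Matrix.mulVec_transpose]
      simp [smul_eq_mul]
    rw [hz]
    simp only [Matrix.mulVec_sub, Matrix.mulVec_add, sub_dotProduct,
      add_dotProduct, dotProduct_sub, dotProduct_add]
    rw [hsym (dd θ') e, h1]
    simp only [dotProduct_sub]
    ring
  let lw : (Fin dn → ℝ) →L[ℝ] ℝ :=
    LinearMap.toContinuousLinearMap
      { toFun := fun u => w ⬝ᵥ u
        map_add' := fun a b => dotProduct_add w a b
        map_smul' := fun c a => by
          simp [dotProduct, Finset.mul_sum, mul_comm, mul_left_comm, mul_assoc] }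
  have hlw : ∀ u, lw u = w ⬝ᵥ u := fun u => rfl
  have hv' := hv.hasFDerivAt
  have hzd : HasFDerivAt z ((-2*β*y) • (lw.comp (fderiv ℝ v θ))) θ := by
    have h2 : HasFDerivAt (fun θ' => lw (v θ')) (lw.comp (fderiv ℝ v θ)) θ :=
      lw.hasFDerivAt.comp θ hv'
    have h3 : HasFDerivAt (fun θ' => w ⬝ᵥ (v θ' - v₀)) (lw.comp (fderiv ℝ v θ)) θ := by
      have heq : (fun θ' => w ⬝ᵥ (v θ' - v₀)) = fun θ' => lw (v θ') - w ⬝ᵥ v₀ := by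
        funext θ'
        rw [hlw, dotProduct_sub]
      rw [heq]
      simpa using h2.sub_const (w ⬝ᵥ v₀)
    rw [hz']
    exact h3.const_mul (-2*β*y)
  have hpos : (0:ℝ) < 1 + Real.exp (z θ) := by positivity
  have hsp : HasDerivAt (fun t : ℝ => Real.log (1 + Real.exp t))
      (Real.exp (z θ) / (1 + Real.exp (z θ))) (z θ) := by
    have h1 : HasDerivAt (fun t : ℝ => 1 + Real.exp t) (Real.exp (z θ)) (z θ) :=
      (Real.hasDerivAt_exp (z θ)).const_add 1
    exact h1.log (ne_of_gt hpos)
  have hLd : HasFDerivAt L ((Real.exp (z θ) / (1 + Real.exp (z θ))) •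
      ((-2*β*y) • (lw.comp (fderiv ℝ v θ)))) θ := by
    rw [hL]
    exact hsp.comp_hasFDerivAt θ hzd
  refine ⟨hLd.differentiableAt, fun i => ?_⟩
  rw [hLd.fderiv]
  have hsig : Real.exp (z θ) / (1 + Real.exp (z θ)) = 1 / (1 + Real.exp (-(z θ))) := by
    rw [Real.exp_neg]
    rw [div_eq_div_iff hpos.ne' (by positivity)]
    field_simp
    ring
  simp only [ContinuousLinearMap.smul_apply, ContinuousLinearMap.coe_comp',
    Function.comp_apply, hlw, smul_eq_mul]
  rw [hsig, dotProduct_comm]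
  ring
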